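/- arXiv:1505.02619 — 2 statements merged into one kernel-verified Lean document; each statement's English description precedes it below -/
import Mathlib

section
/- Let x_1, x_2, x_3 be vertices of three pairwise distinct receiver states (H_1, V_1), (H_2, V_2), (H_3, V_3) over N such that every pair of them satisfies BC1 or BC2. Then there exists a packet combination P ⊆ N that benefits all three vertices. (The Simple P-VACs guarantee the formation of proper 3-cliques; first statement of Theorem 1.) -/
/-- A receiver state over a finite set `N` of packets: a Has set `H ⊆ N` together with
a family `V` of nonempty, pairwise disjoint packet sets (the vertices) whose union is `N \ H`. -/
structure ReceiverState (N : Finset ℕ) where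
  H : Finset ℕ
  V : Finset (Finset ℕ)
  has_subset : H ⊆ N
  vertex_nonempty : ∀ x ∈ V, x.Nonempty
  vertex_disjoint : ∀ x ∈ V, ∀ y ∈ V, x ≠ y → Disjoint x y
  vertex_union : V.sup id = N \ H

/-- `P` is instantly decodable for vertex `x` of receiver state `R`. -/
def InstantlyDecodable {N : Finset ℕ} (R : ReceiverState N) (x P : Finset ℕ) : Prop :=
  P ⊆ x ∪ R.H ∧ (P ∩ x).Nonempty

/-- `P` is aggregating for vertex `x` of receiver state `R`. -/
def Aggregating {N : Finset ℕ} (R : ReceiverState N) (x P : Finset ℕ) : Prop :=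
  ∃ y ∈ R.V, y ≠ x ∧ P ⊆ x ∪ y ∪ R.H ∧ (P ∩ x).Nonempty ∧ (P ∩ y).Nonempty

/-- `P` benefits vertex `x` of receiver state `R`. -/
def Benefits {N : Finset ℕ} (R : ReceiverState N) (x P : Finset ℕ) : Prop :=
  InstantlyDecodable R x P ∨ Aggregating R x P

/-- Condition BC1 between vertices `x` and `y` of two different receiver states. -/
def BC1 (x y : Finset ℕ) : Prop := (x ∩ y).Nonempty

/-- Condition BC2 between vertex `x` of `Ri` and vertex `y` of `Rk`. -/
def BC2 {N : Finset ℕ} (Ri Rk : ReceiverState N) (x y : Finset ℕ) : Prop :=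
  x ∩ y = ∅ ∧ (x ∩ Rk.H).Nonempty ∧ (y ∩ Ri.H).Nonempty

/-!
A combination benefits a vertex `x` as soon as it meets `x` and has at most one packet `q`
outside `x ∪ H`: such a `q` lies in `N \ H`, hence in some other vertex `y`, which makes the
combination aggregating for `x`. If two of the vertices share a packet `a` (BC1), then `{a, c}`
with `c` in the third vertex works for all three. Otherwise all three pairs satisfy BC2, and
picking `a ∈ x₁ ∩ H₂`, `b ∈ x₂ ∩ H₃`, `c ∈ x₃ ∩ H₁` the combination `{a, b, c}` has, for each
vertex, exactly one packet that may lie outside its vertex and Has set.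
-/

namespace ReceiverState

variable {N : Finset ℕ} (R : ReceiverState N)

lemma subset_of_mem_V {x : Finset ℕ} (hx : x ∈ R.V) : x ⊆ N := by
  have h : x ⊆ R.V.sup id := Finset.le_sup (f := id) hx
  rw [R.vertex_union] at h
  exact h.trans Finset.sdiff_subset

lemma exists_mem_V_of_notMem_H {q : ℕ} (hqN : q ∈ N) (hqH : q ∉ R.H) : ∃ y ∈ R.V, q ∈ y := by
  have hq : q ∈ R.V.sup id := by
    rw [R.vertex_union]
    exact Finset.mem_sdiff.mpr ⟨hqN, hqH⟩
  simpa using Finset.mem_sup.mp hq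

end ReceiverState

section

variable {N : Finset ℕ} (R : ReceiverState N) {x P : Finset ℕ}

lemma benefits_of_subset_insert {b : ℕ} (hP : P ⊆ N) (hPx : (P ∩ x).Nonempty)
    (hPb : P ⊆ insert b (x ∪ R.H)) : Benefits R x P := by
  by_cases hdec : P ⊆ x ∪ R.H
  · exact Or.inl ⟨hdec, hPx⟩
  obtain ⟨q, hqP, hq⟩ := Finset.not_subset.mp hdec
  have hqb : q = b := by simpa [hq] using hPb hqP
  subst hqb
  obtain ⟨y, hyV, hqy⟩ := R.exists_mem_V_of_notMem_H (hP hqP) fun h => hq (by simp [h])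
  refine Or.inr ⟨y, hyV, ?_, ?_, hPx, ⟨q, Finset.mem_inter.mpr ⟨hqP, hqy⟩⟩⟩
  · rintro rfl
    exact hq (Finset.mem_union_left _ hqy)
  · intro p hp
    have := hPb hp
    grind

lemma benefits_pair {a c : ℕ} (hP : {a, c} ⊆ N) (ha : a ∈ x) : Benefits R x {a, c} :=
  benefits_of_subset_insert R (b := c) hP ⟨a, by simp [ha]⟩ (by grind)

end

lemma exists_benefits_of_BC1 {N : Finset ℕ} (R R' R'' : ReceiverState N) {x y z : Finset ℕ}
    (hx : x ∈ R.V) (hz : z ∈ R''.V) (hxy : BC1 x y) :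
    ∃ P : Finset ℕ, P ⊆ N ∧ P.Nonempty ∧
      Benefits R x P ∧ Benefits R' y P ∧ Benefits R'' z P := by
  obtain ⟨a, ha⟩ := hxy
  obtain ⟨hax, hay⟩ := Finset.mem_inter.mp ha
  obtain ⟨c, hc⟩ := R''.vertex_nonempty z hz
  have hP : {a, c} ⊆ N := by
    simpa [Finset.insert_subset_iff] using ⟨R.subset_of_mem_V hx hax, R''.subset_of_mem_V hz hc⟩
  refine ⟨{a, c}, hP, Finset.insert_nonempty _ _, benefits_pair R hP hax,
    benefits_pair R' hP hay, ?_⟩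
  rw [Finset.pair_comm] at hP ⊢
  exact benefits_pair R'' hP hc

lemma exists_benefits_of_cyclic_has {N : Finset ℕ} (R1 R2 R3 : ReceiverState N)
    {x1 x2 x3 : Finset ℕ} (hx1 : x1 ∈ R1.V) (hx2 : x2 ∈ R2.V) (hx3 : x3 ∈ R3.V)
    (h12 : (x1 ∩ R2.H).Nonempty) (h23 : (x2 ∩ R3.H).Nonempty) (h31 : (x3 ∩ R1.H).Nonempty) :
    ∃ P : Finset ℕ, P ⊆ N ∧ P.Nonempty ∧
      Benefits R1 x1 P ∧ Benefits R2 x2 P ∧ Benefits R3 x3 P := by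
  obtain ⟨a, ha⟩ := h12
  obtain ⟨b, hb⟩ := h23
  obtain ⟨c, hc⟩ := h31
  rw [Finset.mem_inter] at ha hb hc
  have hP : {a, b, c} ⊆ N := by
    simpa [Finset.insert_subset_iff] using
      ⟨R1.subset_of_mem_V hx1 ha.1, R2.subset_of_mem_V hx2 hb.1, R3.subset_of_mem_V hx3 hc.1⟩
  refine ⟨{a, b, c}, hP, Finset.insert_nonempty _ _, ?_, ?_, ?_⟩
  · exact benefits_of_subset_insert R1 (b := b) hP ⟨a, by simp [ha.1]⟩ (by grind)
  · exact benefits_of_subset_insert R2 (b := c) hP ⟨b, by simp [hb.1]⟩ (by grind)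
  · exact benefits_of_subset_insert R3 (b := a) hP ⟨c, by simp [hc.1]⟩ (by grind)

theorem stmt2_general {N : Finset ℕ} (R1 R2 R3 : ReceiverState N)
    (x1 x2 x3 : Finset ℕ) (hx1 : x1 ∈ R1.V) (hx2 : x2 ∈ R2.V) (hx3 : x3 ∈ R3.V)
    (hp12 : BC1 x1 x2 ∨ BC2 R1 R2 x1 x2)
    (hp13 : BC1 x1 x3 ∨ BC2 R1 R3 x1 x3)
    (hp23 : BC1 x2 x3 ∨ BC2 R2 R3 x2 x3) :
    ∃ P : Finset ℕ, P ⊆ N ∧ P.Nonempty ∧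
      Benefits R1 x1 P ∧ Benefits R2 x2 P ∧ Benefits R3 x3 P := by
  rcases hp12 with h12 | ⟨-, h12, -⟩
  · exact exists_benefits_of_BC1 R1 R2 R3 hx1 hx3 h12
  rcases hp13 with h13 | ⟨-, -, h31⟩
  · obtain ⟨P, hPN, hP, h1, h3, h2⟩ := exists_benefits_of_BC1 R1 R3 R2 hx1 hx2 h13
    exact ⟨P, hPN, hP, h1, h2, h3⟩
  rcases hp23 with h23 | ⟨-, h23, -⟩
  · obtain ⟨P, hPN, hP, h2, h3, h1⟩ := exists_benefits_of_BC1 R2 R3 R1 hx2 hx1 h23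
    exact ⟨P, hPN, hP, h1, h2, h3⟩
  exact exists_benefits_of_cyclic_has R1 R2 R3 hx1 hx2 hx3 h12 h23 h31

/-- First statement of Theorem 1: the Simple P-VACs guarantee proper 3-cliques. -/
theorem stmt2 {N : Finset ℕ} (R1 R2 R3 : ReceiverState N)
    (h12 : R1 ≠ R2) (h13 : R1 ≠ R3) (h23 : R2 ≠ R3)
    (x1 x2 x3 : Finset ℕ) (hx1 : x1 ∈ R1.V) (hx2 : x2 ∈ R2.V) (hx3 : x3 ∈ R3.V)
    (hp12 : BC1 x1 x2 ∨ BC2 R1 R2 x1 x2)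
    (hp13 : BC1 x1 x3 ∨ BC2 R1 R3 x1 x3)
    (hp23 : BC1 x2 x3 ∨ BC2 R2 R3 x2 x3) :
    ∃ P : Finset ℕ, P ⊆ N ∧ P.Nonempty ∧
      Benefits R1 x1 P ∧ Benefits R2 x2 P ∧ Benefits R3 x3 P :=
  stmt2_general R1 R2 R3 x1 x2 x3 hx1 hx2 hx3 hp12 hp13 hp23
end

section
/- Let x_1, x_2, x_3, x_4 be vertices of four pairwise distinct receiver states over N such that x_j ∩ x_l ≠ ∅ for every pair j ≠ l (i.e., all pairs satisfy BC1). Then for every p ∈ x_1 ∩ x_2 and every q ∈ x_3 ∩ x_4, the packet combination {p, q} benefits all four vertices. In particular, considering condition BC1 only, proper 4-cliques are guaranteed (second statement of Theorem 1). -/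
namespace ReceiverState

variable {N : Finset ℕ} (R : ReceiverState N)

lemma mem_of_mem_vertex {x : Finset ℕ} (hx : x ∈ R.V) {a : ℕ} (ha : a ∈ x) : a ∈ N := by
  have : a ∈ R.V.sup id := Finset.mem_sup.2 ⟨x, hx, ha⟩
  rw [R.vertex_union] at this
  exact (Finset.mem_sdiff.1 this).1

lemma mem_H_or_exists_mem_vertex {b : ℕ} (hb : b ∈ N) : b ∈ R.H ∨ ∃ y ∈ R.V, b ∈ y := by
  by_cases hbH : b ∈ R.H
  · exact Or.inl hbH
  · have hb' : b ∈ R.V.sup id := R.vertex_union ▸ Finset.mem_sdiff.2 ⟨hb, hbH⟩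
    exact Or.inr (Finset.mem_sup.1 hb')

/-- Whatever the second packet `b` is, it lies in `H`, in `x` itself, or in another vertex `y`,
and accordingly `{a, b}` is instantly decodable or aggregating for `x` (with `y`). -/
lemma benefits_pair {x : Finset ℕ} (hx : x ∈ R.V) {a b : ℕ} (ha : a ∈ x) (hb : b ∈ N) :
    Benefits R x {a, b} := by
  have hax : (({a, b} : Finset ℕ) ∩ x).Nonempty := ⟨a, by simp [ha]⟩
  rcases R.mem_H_or_exists_mem_vertex hb with hbH | ⟨y, hy, hby⟩
  · exact Or.inl ⟨Finset.insert_subset_iff.2 ⟨by simp [ha], by simp [hbH]⟩, hax⟩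
  by_cases hyx : y = x
  · subst hyx
    exact Or.inl ⟨Finset.insert_subset_iff.2 ⟨by simp [ha], by simp [hby]⟩, hax⟩
  · exact Or.inr ⟨y, hy, hyx, Finset.insert_subset_iff.2 ⟨by simp [ha], by simp [hby]⟩,
      hax, ⟨b, by simp [hby]⟩⟩

end ReceiverState

theorem stmt5_general {N : Finset ℕ} (R1 R2 R3 R4 : ReceiverState N)
    (x1 x2 x3 x4 : Finset ℕ)
    (hx1 : x1 ∈ R1.V) (hx2 : x2 ∈ R2.V) (hx3 : x3 ∈ R3.V) (hx4 : x4 ∈ R4.V) :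
    ∀ p ∈ x1 ∩ x2, ∀ q ∈ x3 ∩ x4,
      Benefits R1 x1 {p, q} ∧ Benefits R2 x2 {p, q} ∧
      Benefits R3 x3 {p, q} ∧ Benefits R4 x4 {p, q} := by
  intro p hp q hq
  rw [Finset.mem_inter] at hp hq
  have hpN : p ∈ N := R1.mem_of_mem_vertex hx1 hp.1
  have hqN : q ∈ N := R3.mem_of_mem_vertex hx3 hq.1
  refine ⟨R1.benefits_pair hx1 hp.1 hqN, R2.benefits_pair hx2 hp.2 hqN, ?_, ?_⟩ <;>
    rw [Finset.pair_comm]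
  exacts [R3.benefits_pair hx3 hq.1 hpN, R4.benefits_pair hx4 hq.2 hpN]

/-- Second statement of Theorem 1 (positive part): if four vertices of pairwise distinct
receiver states pairwise satisfy BC1, then for every `p ∈ x1 ∩ x2` and `q ∈ x3 ∩ x4`
the combination `{p, q}` benefits all four vertices, so proper 4-cliques are guaranteed. -/
theorem stmt5 {N : Finset ℕ} (R1 R2 R3 R4 : ReceiverState N)
    (h12 : R1 ≠ R2) (h13 : R1 ≠ R3) (h14 : R1 ≠ R4)
    (h23 : R2 ≠ R3) (h24 : R2 ≠ R4) (h34 : R3 ≠ R4)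
    (x1 x2 x3 x4 : Finset ℕ)
    (hx1 : x1 ∈ R1.V) (hx2 : x2 ∈ R2.V) (hx3 : x3 ∈ R3.V) (hx4 : x4 ∈ R4.V)
    (hb12 : (x1 ∩ x2).Nonempty) (hb13 : (x1 ∩ x3).Nonempty) (hb14 : (x1 ∩ x4).Nonempty)
    (hb23 : (x2 ∩ x3).Nonempty) (hb24 : (x2 ∩ x4).Nonempty) (hb34 : (x3 ∩ x4).Nonempty) :
    ∀ p ∈ x1 ∩ x2, ∀ q ∈ x3 ∩ x4,
      Benefits R1 x1 {p, q} ∧ Benefits R2 x2 {p, q} ∧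
      Benefits R3 x3 {p, q} ∧ Benefits R4 x4 {p, q} :=
  stmt5_general R1 R2 R3 R4 x1 x2 x3 x4 hx1 hx2 hx3 hx4
end
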